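/- arXiv:1105.4722 — 2 statements merged into one kernel-verified Lean document; each statement's English description precedes it below -/
import Mathlib

section
/- Let η, ξ₁ ∈ ℂ, q = e^η, with q^{2m} ≠ 1 for all 1 ≤ m ≤ ℓ, and let 1 ≤ i,j ≤ ℓ. For every fixed subset A ⊆ {1,…,ℓ} with |A| = i, the spin-ℓ/2 elementary operator satisfies the reduction formula ||ℓ,i⟩⟨ℓ,j|| = [ℓ choose i]_q [ℓ choose j]_q^{−1} q^{i(i−1)/2 − j(j−1)/2} e^{−(i−j)ξ₁} · P^{(ℓ)} · Σ_{B⊆{1,…,ℓ}, |B|=j} χ |1_A⟩⟨1_B| χ^{−1}, where χ = ⊗_{k=1}^{ℓ} diag(1, e^{ξ₁−(k−1)η}); in particular the right-hand side is independent of the choice of A. -/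
noncomputable section

/-- The q-integer `[n]_q = (qⁿ − q⁻ⁿ)/(q − q⁻¹)`. -/
def qint (q : ℂ) (n : ℕ) : ℂ := (q ^ (n : ℤ) - q ^ (-(n : ℤ))) / (q - q⁻¹)

/-- The q-factorial `[n]_q! = ∏_{m=1}^n [m]_q`. -/
def qfact (q : ℂ) (n : ℕ) : ℂ := ∏ m ∈ Finset.range n, qint q (m + 1)

/-- The q-binomial coefficient `[l choose n]_q`. -/
def qbinom (q : ℂ) (l n : ℕ) : ℂ := qfact q l / (qfact q (l - n) * qfact q n)
/-- Index of the standard basis of `(ℂ²)^{⊗l}`: spin configurations `{0,1}^l`. -/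
abbrev SpinIdx (l : ℕ) := Fin l → Fin 2

/-- Vectors in `(ℂ²)^{⊗l}`. -/
abbrev SpinVec (l : ℕ) := SpinIdx l → ℂ

/-- Operators (matrices) on `(ℂ²)^{⊗l}`. -/
abbrev SpinOp (l : ℕ) := Matrix (SpinIdx l) (SpinIdx l) ℂ

/-- The indicator configuration of a subset `A`: down spins exactly on `A`. -/
def indFun {l : ℕ} (A : Finset (Fin l)) : SpinIdx l := fun k => if k ∈ A then 1 else 0

/-- The standard basis vector `|1_A⟩` with down spins exactly on `A`. -/
def bvec {l : ℕ} (A : Finset (Fin l)) : SpinVec l := fun ε => if ε = indFun A then 1 else 0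

/-- `Σ_{a ∈ A} a`, where the site `k : Fin l` has 1-based number `k+1 ∈ {1,…,l}`. -/
def siteSum {l : ℕ} (A : Finset (Fin l)) : ℤ := ∑ a ∈ A, ((a : ℤ) + 1)

/-- Coefficient `q^{(Σ_{a∈A} a) − i·l + i(i−1)/2}`. -/
def hwt (q : ℂ) {l : ℕ} (i : ℕ) (A : Finset (Fin l)) : ℂ :=
  q ^ (siteSum A - (i : ℤ) * (l : ℤ) + (i : ℤ) * ((i : ℤ) - 1) / 2)

/-- The spin-`l/2` basis vector `||l,i⟩`. -/
def hv (q : ℂ) (l i : ℕ) : SpinVec l :=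
  ∑ A ∈ Finset.powersetCard i (Finset.univ : Finset (Fin l)), hwt q i A • bvec A

/-- The conjugate covector `⟨l,j||` (represented by its coefficient vector; the pairing
is the bilinear transpose pairing). -/
def cv (q : ℂ) (l j : ℕ) : SpinVec l :=
  ((qbinom q l j)⁻¹ * q ^ ((j : ℤ) * ((l : ℤ) - (j : ℤ)))) •
    ∑ B ∈ Finset.powersetCard j (Finset.univ : Finset (Fin l)), hwt q j B • bvec B

/-- The rank-one operator `|u⟩⟨v|` (transpose pairing). -/
def rankOne {l : ℕ} (u v : SpinVec l) : SpinOp l := Matrix.of fun ε ε' => u ε * v ε'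

/-- The spin-`l/2` projector `P^{(l)} = Σ_{n=0}^{l} ||l,n⟩⟨l,n||`. -/
def proj (q : ℂ) (l : ℕ) : SpinOp l :=
  ∑ n ∈ Finset.range (l + 1), rankOne (hv q l n) (cv q l n)

/-- The elementary operator `e_k^{a,b}` acting on the k-th tensor factor. -/
def elem {l : ℕ} (k : Fin l) (a b : Fin 2) : SpinOp l :=
  Matrix.of fun ε ε' => if ε k = a ∧ ε' k = b ∧ ∀ m, m ≠ k → ε m = ε' m then 1 else 0

/-- The ordered product `e_1^{e'_1,e_1} ⋯ e_l^{e'_l,e_l}`. -/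
def elemProd {l : ℕ} (e' e : Fin l → Fin 2) : SpinOp l :=
  (List.ofFn fun k : Fin l => elem k (e' k) (e k)).prod

/-- The gauge matrix `⊗_s diag(1, e^{w s})`. -/
def gaugeM {S : Type*} [Fintype S] [DecidableEq S] (w : S → ℂ) :
    Matrix (S → Fin 2) (S → Fin 2) ℂ :=
  Matrix.diagonal fun ε => ∏ s, if ε s = 1 then Complex.exp (w s) else 1


/-!
The gauge `χ` is diagonal in the spin basis, so `χ |1_A⟩⟨1_B| χ⁻¹` is `|1_A⟩⟨1_B|` rescaled by
`e^{Σ_A w} e^{-Σ_B w}` with `w_k = ξ₁ − (k−1)η`, while `P^{(ℓ)} |1_A⟩ = ⟨ℓ,i‖1_A⟩ ‖ℓ,i⟩` for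
`|A| = i`. The gauge weight is tuned so that `e^{Σ_A w} ⟨ℓ,n‖1_A⟩` depends only on `n = |A|`.
Hence the `B`-th summand on the right is `‖ℓ,i⟩⟨1_B|` times `e^{-Σ_B w}` times a constant, which by
the same identity for `B` is the coefficient of `⟨1_B|` in `⟨ℓ,j‖`; summing over `B` gives
`‖ℓ,i⟩⟨ℓ,j‖`.
-/

open Matrix Finset

lemma indFun_eq_one_iff {l : ℕ} (A : Finset (Fin l)) (s : Fin l) : indFun A s = 1 ↔ s ∈ A := by
  by_cases hs : s ∈ A <;> simp [indFun, hs]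

lemma indFun_injective {l : ℕ} : Function.Injective (indFun (l := l)) := by
  intro A B h
  ext s
  rw [← indFun_eq_one_iff, ← indFun_eq_one_iff, h]

lemma bvec_eq_single {l : ℕ} (A : Finset (Fin l)) : bvec A = Pi.single (indFun A) 1 := by
  ext ε
  simp [bvec, Pi.single_apply]

lemma bvec_apply_indFun {l : ℕ} (A B : Finset (Fin l)) :
    bvec B (indFun A) = if A = B then 1 else 0 := by
  simp [bvec, indFun_injective.eq_iff]

lemma rankOne_eq_vecMulVec {l : ℕ} (u v : SpinVec l) : rankOne u v = vecMulVec u v := rfl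

section Projector

variable (q : ℂ) (l : ℕ)

lemma cv_apply_indFun (n : ℕ) (A : Finset (Fin l)) :
    cv q l n (indFun A) =
      if A.card = n then (qbinom q l n)⁻¹ * q ^ ((n : ℤ) * ((l : ℤ) - (n : ℤ))) * hwt q n A
      else 0 := by
  simp only [cv, Pi.smul_apply, Finset.sum_apply, smul_eq_mul, bvec_apply_indFun, mul_ite,
    mul_one, mul_zero, sum_ite_eq, mem_powersetCard_univ]

lemma rankOne_cv {n : ℕ} (u : SpinVec l) :
    rankOne u (cv q l n) =
      ∑ B ∈ powersetCard n univ, cv q l n (indFun B) • rankOne u (bvec B) := by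
  ext ε ε'
  simp only [rankOne, of_apply, Matrix.sum_apply, Matrix.smul_apply, smul_eq_mul,
    cv_apply_indFun]
  simp only [cv, Pi.smul_apply, Finset.sum_apply, smul_eq_mul, mul_sum]
  refine sum_congr rfl fun B hB => ?_
  rw [if_pos (mem_powersetCard_univ.mp hB)]
  ring

lemma proj_mul_rankOne_bvec {A : Finset (Fin l)} (hA : A.card ≤ l) (v : SpinVec l) :
    proj q l * rankOne (bvec A) v = cv q l A.card (indFun A) • rankOne (hv q l A.card) v := by
  simp only [proj, sum_mul, rankOne_eq_vecMulVec, vecMulVec_mul_vecMulVec, bvec_eq_single,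
    dotProduct_single, mul_one, vecMulVec_smul]
  refine sum_eq_single A.card (fun n _ hn => ?_) (fun h => (h (mem_range_succ_iff.mpr hA)).elim)
  rw [cv_apply_indFun, if_neg hn.symm, zero_smul]

end Projector

section Gauge

lemma gaugeM_mul_gaugeM {S : Type*} [Fintype S] [DecidableEq S] (w w' : S → ℂ) :
    gaugeM w * gaugeM w' = gaugeM (w + w') := by
  simp only [gaugeM, diagonal_mul_diagonal, ← prod_mul_distrib]
  congr! 3 with ε s
  split_ifs <;> simp [Complex.exp_add]

lemma inv_gaugeM {S : Type*} [Fintype S] [DecidableEq S] (w : S → ℂ) :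
    (gaugeM w)⁻¹ = gaugeM (-w) := by
  refine inv_eq_right_inv ?_
  rw [gaugeM_mul_gaugeM, add_neg_cancel]
  simp [gaugeM]

variable {l : ℕ} (w : Fin l → ℂ)

lemma prod_ite_indFun_eq_exp_sum (A : Finset (Fin l)) :
    (∏ s, if indFun A s = 1 then Complex.exp (w s) else 1) = Complex.exp (∑ s ∈ A, w s) := by
  simp only [indFun_eq_one_iff, prod_ite_mem, univ_inter, Complex.exp_sum]

lemma gaugeM_mul_rankOne_bvec (A : Finset (Fin l)) (v : SpinVec l) :
    gaugeM w * rankOne (bvec A) v = Complex.exp (∑ s ∈ A, w s) • rankOne (bvec A) v := by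
  rw [rankOne_eq_vecMulVec, mul_vecMulVec, bvec_eq_single, gaugeM, diagonal_mulVec_single,
    ← smul_eq_mul, Pi.single_smul', smul_vecMulVec, prod_ite_indFun_eq_exp_sum]

lemma rankOne_bvec_mul_gaugeM (u : SpinVec l) (B : Finset (Fin l)) :
    rankOne u (bvec B) * gaugeM w = Complex.exp (∑ s ∈ B, w s) • rankOne u (bvec B) := by
  rw [rankOne_eq_vecMulVec, vecMulVec_mul, bvec_eq_single, gaugeM, single_vecMul_diagonal,
    one_mul, ← prod_ite_indFun_eq_exp_sum, ← vecMulVec_smul, ← Pi.single_smul', smul_eq_mul,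
    mul_one]

lemma gaugeM_conj_rankOne_bvec (A B : Finset (Fin l)) :
    gaugeM w * rankOne (bvec A) (bvec B) * (gaugeM w)⁻¹ =
      (Complex.exp (∑ s ∈ A, w s) * (Complex.exp (∑ s ∈ B, w s))⁻¹) •
        rankOne (bvec A) (bvec B) := by
  rw [inv_gaugeM, gaugeM_mul_rankOne_bvec, Matrix.smul_mul, rankOne_bvec_mul_gaugeM, smul_smul]
  simp [sum_neg_distrib, Complex.exp_neg]

end Gauge

section QNumbers

variable {q : ℂ}

lemma zpow_sub_zpow_neg_ne_zero (hq : q ≠ 0) {m : ℕ} (hm : q ^ (2 * m) ≠ 1) :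
    q ^ (m : ℤ) - q ^ (-(m : ℤ)) ≠ 0 := by
  intro h
  apply hm
  calc q ^ (2 * m) = q ^ (m : ℤ) * q ^ (m : ℤ) := by rw [← zpow_add₀ hq]; norm_cast; ring_nf
    _ = q ^ (m : ℤ) * q ^ (-(m : ℤ)) := by rw [sub_eq_zero.mp h]
    _ = 1 := by rw [← zpow_add₀ hq, add_neg_cancel, zpow_zero]

lemma qint_ne_zero (hq : q ≠ 0) (hq2 : q ^ 2 ≠ 1) {m : ℕ} (hm : q ^ (2 * m) ≠ 1) :
    qint q m ≠ 0 := by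
  refine div_ne_zero (zpow_sub_zpow_neg_ne_zero hq hm) ?_
  simpa using zpow_sub_zpow_neg_ne_zero hq (m := 1) hq2

lemma qfact_ne_zero (hq : q ≠ 0) {n : ℕ} (hroot : ∀ m : ℕ, 1 ≤ m → m ≤ n → q ^ (2 * m) ≠ 1) :
    qfact q n ≠ 0 := by
  refine prod_ne_zero_iff.mpr fun m hm => ?_
  have hmn : m + 1 ≤ n := mem_range.mp hm
  exact qint_ne_zero hq (by simpa using hroot 1 le_rfl (by omega)) (hroot (m + 1) (by omega) hmn)

lemma qbinom_ne_zero (hq : q ≠ 0) {l n : ℕ} (hn : n ≤ l)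
    (hroot : ∀ m : ℕ, 1 ≤ m → m ≤ l → q ^ (2 * m) ≠ 1) : qbinom q l n ≠ 0 := by
  have hfact : ∀ k ≤ l, qfact q k ≠ 0 := fun k hk =>
    qfact_ne_zero hq fun m h1 hm => hroot m h1 (hm.trans hk)
  exact div_ne_zero (hfact l le_rfl) (mul_ne_zero (hfact _ (Nat.sub_le l n)) (hfact n hn))

end QNumbers

lemma exp_sum_mul_cv_apply_indFun (η ξ : ℂ) {l n : ℕ} {A : Finset (Fin l)} (hA : A.card = n) :
    Complex.exp (∑ k ∈ A, (ξ - (k.val : ℂ) * η)) * cv (Complex.exp η) l n (indFun A) =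
      (qbinom (Complex.exp η) l n)⁻¹ * Complex.exp (n * ξ) *
        Complex.exp η ^ (-((n : ℤ) * ((n : ℤ) - 1) / 2)) := by
  set q := Complex.exp η
  set T : ℤ := (n : ℤ) * ((n : ℤ) - 1) / 2 with hT
  have hT2 : 2 * T = n * (n - 1) := Int.mul_ediv_cancel' (Int.even_mul_pred_self _).two_dvd
  have hsum : ∑ k ∈ A, (ξ - (k.val : ℂ) * η) = n * ξ + ((-(siteSum A - n) : ℤ) : ℂ) * η := by
    simp only [sum_sub_distrib, sum_const, hA, nsmul_eq_mul, ← sum_mul, siteSum]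
    push_cast
    rw [sum_add_distrib, sum_const, hA]
    ring
  -- the `A`-dependence `siteSum A` cancels between the gauge weight and `hwt`
  have hpow : q ^ (-(siteSum A - n)) * q ^ ((n : ℤ) * ((l : ℤ) - (n : ℤ))) *
      q ^ (siteSum A - (n : ℤ) * (l : ℤ) + T) = q ^ (-T) := by
    rw [← zpow_add₀ (Complex.exp_ne_zero η), ← zpow_add₀ (Complex.exp_ne_zero η)]
    congr 1
    linear_combination hT2
  rw [cv_apply_indFun, if_pos hA, hwt, hsum, Complex.exp_add, Complex.exp_int_mul, ← hT]
  linear_combination (Complex.exp (n * ξ) * (qbinom q l n)⁻¹) * hpow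

theorem reduction_formula_general (ℓ : ℕ) (η ξ₁ : ℂ) (i j : ℕ)
    (hil : i ≤ ℓ)
    (hroot : ∀ m : ℕ, 1 ≤ m → m ≤ ℓ → Complex.exp η ^ (2 * m) ≠ 1)
    (A : Finset (Fin ℓ)) (hA : A.card = i) :
    rankOne (hv (Complex.exp η) ℓ i) (cv (Complex.exp η) ℓ j)
      = (qbinom (Complex.exp η) ℓ i * (qbinom (Complex.exp η) ℓ j)⁻¹ *
          Complex.exp η ^ ((i : ℤ) * ((i : ℤ) - 1) / 2 - (j : ℤ) * ((j : ℤ) - 1) / 2) *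
          Complex.exp (-(((i : ℂ) - (j : ℂ)) * ξ₁))) •
        (proj (Complex.exp η) ℓ *
          ∑ B ∈ Finset.powersetCard j (Finset.univ : Finset (Fin ℓ)),
            gaugeM (fun k : Fin ℓ => ξ₁ - (k.val : ℂ) * η) * rankOne (bvec A) (bvec B) *
              (gaugeM (fun k : Fin ℓ => ξ₁ - (k.val : ℂ) * η))⁻¹) := by
  have hq : Complex.exp η ≠ 0 := Complex.exp_ne_zero η
  have hbinom : qbinom (Complex.exp η) ℓ i ≠ 0 := qbinom_ne_zero hq hil hroot
  have hweightA := exp_sum_mul_cv_apply_indFun η ξ₁ (l := ℓ) hA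
  simp only [gaugeM_conj_rankOne_bvec, mul_sum, Matrix.mul_smul,
    proj_mul_rankOne_bvec _ _ (hA.trans_le hil), hA, smul_sum, smul_smul, rankOne_cv]
  refine sum_congr rfl fun B hB => ?_
  congr 1
  have hweightB := exp_sum_mul_cv_apply_indFun η ξ₁ (mem_powersetCard_univ.mp hB)
  rw [(eq_inv_mul_iff_mul_eq₀ (Complex.exp_ne_zero _)).mpr hweightA,
    (eq_inv_mul_iff_mul_eq₀ (Complex.exp_ne_zero _)).mpr hweightB, zpow_sub₀ hq,
    _root_.zpow_neg, _root_.zpow_neg,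
    show -(((i : ℂ) - j) * ξ₁) = j * ξ₁ - i * ξ₁ by ring, Complex.exp_sub]
  field_simp
  ring_nf

/-- Reduction formula for the spin-`ℓ/2` elementary operator: for every
fixed `A` with `|A| = i` (with `q = e^η`, `χ = ⊗_k diag(1, e^{ξ₁−(k−1)η})`),
`||ℓ,i⟩⟨ℓ,j|| = [ℓ choose i]_q [ℓ choose j]_q^{−1} q^{i(i−1)/2 − j(j−1)/2} e^{−(i−j)ξ₁}
  · P^{(ℓ)} · Σ_{|B|=j} χ |1_A⟩⟨1_B| χ⁻¹`;
in particular the right-hand side is independent of the choice of `A`. -/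
theorem reduction_formula (ℓ : ℕ) (η ξ₁ : ℂ) (i j : ℕ)
    (hi1 : 1 ≤ i) (hil : i ≤ ℓ) (hj1 : 1 ≤ j) (hjl : j ≤ ℓ)
    (hroot : ∀ m : ℕ, 1 ≤ m → m ≤ ℓ → Complex.exp η ^ (2 * m) ≠ 1)
    (A : Finset (Fin ℓ)) (hA : A.card = i) :
    rankOne (hv (Complex.exp η) ℓ i) (cv (Complex.exp η) ℓ j)
      = (qbinom (Complex.exp η) ℓ i * (qbinom (Complex.exp η) ℓ j)⁻¹ *
          Complex.exp η ^ ((i : ℤ) * ((i : ℤ) - 1) / 2 - (j : ℤ) * ((j : ℤ) - 1) / 2) *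
          Complex.exp (-(((i : ℂ) - (j : ℂ)) * ξ₁))) •
        (proj (Complex.exp η) ℓ *
          ∑ B ∈ Finset.powersetCard j (Finset.univ : Finset (Fin ℓ)),
            gaugeM (fun k : Fin ℓ => ξ₁ - (k.val : ℂ) * η) * rankOne (bvec A) (bvec B) *
              (gaugeM (fun k : Fin ℓ => ξ₁ - (k.val : ℂ) * η))⁻¹) :=
  reduction_formula_general ℓ η ξ₁ i j hil hroot A hA
end
end

section
/- Fix integers ℓ ≥ 2, N_s ≥ 1, L = ℓN_s, and parameters η, ξ₁,…,ξ_{N_s} ∈ ℂ, and set the inhomogeneities equal to the complete ℓ-strings w_j = w^{(ℓ)}_j. Let 1 ≤ k ≤ N_s and assume sinh(ξ_k − w^{(ℓ)}_j + η) ≠ 0 for all 1 ≤ j ≤ L, so that the transfer matrix A(ξ_k)+D(ξ_k) is defined. Then for every integer M with 1 ≤ M ≤ L−1, the transfer matrix A(ξ_k)+D(ξ_k) preserves the subspace of (ℂ²)^{⊗L} spanned by the basis vectors with exactly M down spins, and its restriction to this subspace is not invertible (it has nontrivial kernel); i.e., the spin-1/2 transfer matrix with complete ℓ-string inhomogeneities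 is non-regular at λ = ξ_k. -/
noncomputable section

/-- Sites of the chain of `Ns` blocks of `l` spin-1/2 sites: block `b`, position `β`
(1-based site number `l·b + β + 1`; lexicographic order is the site order). -/
abbrev FSite (l Ns : ℕ) := Fin Ns × Fin l

/-- Spin configurations of the full chain `(ℂ²)^{⊗(l·Ns)}`. -/
abbrev FIdx2 (l Ns : ℕ) := FSite l Ns → Fin 2

/-- Operators on the full chain. -/
abbrev FOp (l Ns : ℕ) := Matrix (FIdx2 l Ns) (FIdx2 l Ns) ℂ

/-- Embed an operator on one block of `l` factors into the full chain (block `b`,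
identity elsewhere). -/
def embed {l Ns : ℕ} (b : Fin Ns) (M : SpinOp l) : FOp l Ns :=
  Matrix.of fun ε ε' =>
    if ∀ s : FSite l Ns, s.1 ≠ b → ε s = ε' s then
      M (fun β => ε (b, β)) (fun β => ε' (b, β)) else 0

/-- The complete `l`-string inhomogeneities `w^{(l)}_{l(b−1)+β} = ξ_b − (β−1)η`. -/
def wstring (l Ns : ℕ) (η : ℂ) (ξ : Fin Ns → ℂ) : FSite l Ns → ℂ :=
  fun s => ξ s.1 - (s.2.val : ℂ) * η

/-- The full projector `P^{(l)}_{1…L} = ⊗_{b=1}^{Ns} P^{(l)}` (one per block). -/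
def projFull (q : ℂ) (l Ns : ℕ) : FOp l Ns :=
  Matrix.of fun ε ε' => ∏ b : Fin Ns, proj q l (fun β => ε (b, β)) (fun β => ε' (b, β))

/-- The normalization `F(l,n) = [l choose n]_q q^{−n(l−n)}`. -/
def Fnorm (q : ℂ) (l n : ℕ) : ℂ := qbinom q l n * q ^ (-(n : ℤ) * ((l : ℤ) - (n : ℤ)))

/-- The normalization factor `N̂_{i,j} = (g(j)/g(i))·(F(l,i)/F(l,j))·e^{η(i(l−i)−j(l−j))/2}`. -/
def Nhat (q η : ℂ) (g : ℕ → ℂ) (l i j : ℕ) : ℂ :=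
  (g j / g i) * (Fnorm q l i / Fnorm q l j) *
    Complex.exp (η * (((i : ℂ) * ((l : ℂ) - (i : ℂ)) - (j : ℂ) * ((l : ℂ) - (j : ℂ))) / 2))
/-- `b(u) = sinh u / sinh(u+η)`. -/
def bC (η u : ℂ) : ℂ := Complex.sinh u / Complex.sinh (u + η)

/-- `c⁺(u) = e^{u} sinh η / sinh(u+η)`. -/
def cP (η u : ℂ) : ℂ := Complex.exp u * Complex.sinh η / Complex.sinh (u + η)

/-- `c⁻(u) = e^{−u} sinh η / sinh(u+η)`. -/
def cM (η u : ℂ) : ℂ := Complex.exp (-u) * Complex.sinh η / Complex.sinh (u + η)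

/-- The homogeneous-grading R-matrix `R⁺(u)` on `ℂ² ⊗ ℂ²`: identity on `|00⟩`, `|11⟩`,
and `[[b, c⁻],[c⁺, b]]` on `span{|01⟩, |10⟩}`. -/
def Rplus (η u : ℂ) : Matrix (Fin 2 × Fin 2) (Fin 2 × Fin 2) ℂ :=
  Matrix.of fun p p' =>
    if p = p' then (if p.1 = p.2 then 1 else bC η u)
    else if p.1 = 0 ∧ p.2 = 1 ∧ p'.1 = 1 ∧ p'.2 = 0 then cM η u
    else if p.1 = 1 ∧ p.2 = 0 ∧ p'.1 = 0 ∧ p'.2 = 1 then cP η u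
    else 0

/-- The principal-grading (symmetric) R-matrix `R^p(u)`: identity on `|00⟩`, `|11⟩`,
and `[[b, c],[c, b]]` on `span{|01⟩, |10⟩}` with `c(u) = sinh η / sinh(u+η)`. -/
def Rprin (η u : ℂ) : Matrix (Fin 2 × Fin 2) (Fin 2 × Fin 2) ℂ :=
  Matrix.of fun p p' =>
    if p = p' then (if p.1 = p.2 then 1 else bC η u)
    else if (p.1 = 0 ∧ p.2 = 1 ∧ p'.1 = 1 ∧ p'.2 = 0) ∨
            (p.1 = 1 ∧ p.2 = 0 ∧ p'.1 = 0 ∧ p'.2 = 1) then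
      Complex.sinh η / Complex.sinh (u + η)
    else 0

/-- A 4×4 R-matrix acting on the pair (auxiliary space 0, quantum site j), identity on
the other sites. -/
def Rsite {S : Type*} [DecidableEq S] [Fintype S]
    (R2 : Matrix (Fin 2 × Fin 2) (Fin 2 × Fin 2) ℂ) (j : S) :
    Matrix (Fin 2 × (S → Fin 2)) (Fin 2 × (S → Fin 2)) ℂ :=
  Matrix.of fun p p' =>
    if ∀ k, k ≠ j → p.2 k = p'.2 k then R2 (p.1, p.2 j) (p'.1, p'.2 j) else 0

/-- The monodromy matrix `T(λ) = R_{0,L}(λ−w_L) ⋯ R_{0,1}(λ−w_1)`, where `sites` lists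
the sites `1,…,L` in increasing order. -/
def monodromy {S : Type*} [DecidableEq S] [Fintype S]
    (R2 : ℂ → Matrix (Fin 2 × Fin 2) (Fin 2 × Fin 2) ℂ)
    (sites : List S) (w : S → ℂ) (lam : ℂ) :
    Matrix (Fin 2 × (S → Fin 2)) (Fin 2 × (S → Fin 2)) ℂ :=
  ((sites.map fun j => Rsite (R2 (lam - w j)) j).reverse).prod

/-- The auxiliary-space block entry of a monodromy matrix: `T_{a,b}` acting on the
quantum space (so `A = T_{0,0}`, `B = T_{0,1}`, `C = T_{1,0}`, `D = T_{1,1}`). -/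
def entryT {S : Type*} (T : Matrix (Fin 2 × (S → Fin 2)) (Fin 2 × (S → Fin 2)) ℂ)
    (a b : Fin 2) : Matrix (S → Fin 2) (S → Fin 2) ℂ :=
  Matrix.of fun ε ε' => T (a, ε) (b, ε')

/-- The number of down spins of a configuration. -/
def dcount {S : Type*} [Fintype S] [DecidableEq S] (ε : S → Fin 2) : ℕ :=
  (Finset.univ.filter fun s => ε s = 1).card

/-- The list of sites of the blocked chain in increasing (lexicographic) order. -/
def sitesList (l Ns : ℕ) : List (Fin Ns × Fin l) :=
  (List.finRange Ns).flatMap fun b => (List.finRange l).map fun β => (b, β)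

/-!
At `λ = ξ_k` the first two sites `i₀ = (k,0)`, `i₁ = (k,1)` of block `k` carry the spectral
parameters `0` and `η`. Since `R⁺(0)` is the permutation operator, pushing it through
`R_{0 i₁}(η)` turns the latter into `R_{i₀ i₁}(η)`, which acts on the quantum space only and
hence commutes with the factors of all earlier sites: `T(ξ_k) = W · R_{i₀ i₁}(η)`. On
`span{|01⟩, |10⟩}` the matrix `R⁺(η)` is singular (`b(η)² = c⁺(η) c⁻(η)`), with kernel vector
`|01⟩ − e^η |10⟩`; completed by `M − 1` down spins elsewhere, it is a nonzero vector of the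
`M`-sector killed by `T(ξ_k)` for both auxiliary states, hence by `A + D`. The sector itself is
preserved because each `R⁺` conserves the number of down spins in auxiliary plus quantum space.
-/

namespace Matrix

variable {ι κ α : Type*} [Semiring α]

def Conserves (f : ι → κ) (T : Matrix ι ι α) : Prop :=
  ∀ p p', T p p' ≠ 0 → f p = f p'

theorem Conserves.one [DecidableEq ι] (f : ι → κ) : (1 : Matrix ι ι α).Conserves f := by
  intro p p' h
  obtain rfl : p = p' := by_contra fun hne => h (one_apply_ne hne)
  rfl

theorem Conserves.mul [Fintype ι] {f : ι → κ} {A B : Matrix ι ι α} (hA : A.Conserves f)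
    (hB : B.Conserves f) : (A * B).Conserves f := by
  intro p p' h
  obtain ⟨y, -, hy⟩ := Finset.exists_ne_zero_of_sum_ne_zero h
  exact (hA p y (left_ne_zero_of_mul hy)).trans (hB y p' (right_ne_zero_of_mul hy))

theorem Conserves.list_prod [Fintype ι] [DecidableEq ι] {f : ι → κ} {l : List (Matrix ι ι α)}
    (h : ∀ A ∈ l, A.Conserves f) : l.prod.Conserves f := by
  induction l with
  | nil => exact Conserves.one f
  | cons A l ih =>
    rw [List.prod_cons]
    exact (h A List.mem_cons_self).mul (ih fun B hB => h B (List.mem_cons_of_mem A hB))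

end Matrix

open Matrix

section Chain

variable {S : Type*} [DecidableEq S]

def swapAux (j : S) : Equiv.Perm (Fin 2 × (S → Fin 2)) :=
  Function.Involutive.toPerm (fun p => (p.2 j, Function.update p.2 j p.1)) fun p => by simp

@[simp]
theorem swapAux_apply (j : S) (a : Fin 2) (ε : S → Fin 2) :
    swapAux j (a, ε) = (ε j, Function.update ε j a) := rfl

theorem swapAux_symm (j : S) : (swapAux j).symm = swapAux j :=
  Function.Involutive.toPerm_symm _

variable [Fintype S]

def Rpair (R : Matrix (Fin 2 × Fin 2) (Fin 2 × Fin 2) ℂ) (i₀ i₁ : S) :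
    Matrix (Fin 2 × (S → Fin 2)) (Fin 2 × (S → Fin 2)) ℂ :=
  of fun p p' => if p.1 = p'.1 ∧ ∀ s, s ≠ i₀ → s ≠ i₁ → p.2 s = p'.2 s then
    R (p.2 i₀, p.2 i₁) (p'.2 i₀, p'.2 i₁) else 0

theorem dcount_eq_sum (ε : S → Fin 2) : dcount ε = ∑ s, (ε s).val := by
  rw [dcount, Finset.card_filter]
  exact Finset.sum_congr rfl fun s _ => by generalize ε s = x; fin_cases x <;> rfl

theorem dcount_comp_perm (ε : S → Fin 2) (σ : Equiv.Perm S) : dcount (ε ∘ σ) = dcount ε := by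
  simp only [dcount_eq_sum]
  exact Equiv.sum_comp σ fun s => (ε s).val

theorem exists_dcount_eq {i₀ i₁ : S} (h : i₀ ≠ i₁) {M : ℕ} (hM₁ : 1 ≤ M)
    (hM₂ : M < Fintype.card S) : ∃ ε : S → Fin 2, ε i₀ = 0 ∧ ε i₁ = 1 ∧ dcount ε = M := by
  have hcard : M - 1 ≤ (Finset.univ \ {i₀, i₁}).card := by
    rw [Finset.card_sdiff_of_subset (Finset.subset_univ _), Finset.card_pair h, Finset.card_univ]
    omega
  obtain ⟨A, hA, hAcard⟩ := Finset.exists_subset_card_eq hcard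
  have hi₀ : i₀ ∉ A := fun hi => by simpa using hA hi
  have hi₁ : i₁ ∉ A := fun hi => by simpa using hA hi
  refine ⟨fun s => if s ∈ insert i₁ A then 1 else 0, by simp [h, hi₀], by simp, ?_⟩
  have hdown : (Finset.univ.filter fun s => (if s ∈ insert i₁ A then (1 : Fin 2) else 0) = 1)
      = insert i₁ A := by
    ext s
    simp only [Finset.mem_filter, Finset.mem_univ, true_and]
    split_ifs with hs <;> simpa using hs
  rw [dcount, hdown, Finset.card_insert_of_notMem hi₁, hAcard]
  omega

theorem Rplus_conserves (η u : ℂ) : (Rplus η u).Conserves fun q => q.1.val + q.2.val := by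
  intro p p' h
  fin_cases p <;> fin_cases p' <;> simp_all [Rplus, Prod.ext_iff]

theorem Rsite_conserves {R : Matrix (Fin 2 × Fin 2) (Fin 2 × Fin 2) ℂ}
    (hR : R.Conserves fun q => q.1.val + q.2.val) (j : S) :
    (Rsite R j).Conserves fun p => p.1.val + dcount p.2 := by
  rintro ⟨a, ε⟩ ⟨b, ε'⟩ h
  simp only [Rsite, of_apply, ne_eq, ite_eq_right_iff, not_forall] at h
  obtain ⟨hoff, hR'⟩ := h
  have hj := hR _ _ hR'
  simp only [dcount_eq_sum] at hj ⊢
  rw [← Finset.add_sum_erase _ _ (Finset.mem_univ j),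
    ← Finset.add_sum_erase _ (fun s => (ε' s).val) (Finset.mem_univ j),
    Finset.sum_congr rfl fun s hs => by rw [hoff s (Finset.ne_of_mem_erase hs)]]
  omega

theorem monodromy_conserves {R2 : ℂ → Matrix (Fin 2 × Fin 2) (Fin 2 × Fin 2) ℂ}
    (hR : ∀ u, (R2 u).Conserves fun q => q.1.val + q.2.val) (sites : List S) (w : S → ℂ)
    (lam : ℂ) : (monodromy R2 sites w lam).Conserves fun p => p.1.val + dcount p.2 := by
  refine Conserves.list_prod fun A hA => ?_
  obtain ⟨j, -, rfl⟩ := List.mem_map.mp (List.mem_reverse.mp hA)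
  exact Rsite_conserves (hR _) j

theorem entryT_mulVec (T : Matrix (Fin 2 × (S → Fin 2)) (Fin 2 × (S → Fin 2)) ℂ)
    (a b : Fin 2) (v : (S → Fin 2) → ℂ) :
    entryT T a b *ᵥ v = fun ε => (T *ᵥ Function.uncurry (Pi.single b v)) (a, ε) := by
  ext ε
  simp [mulVec, dotProduct, entryT, Fintype.sum_prod_type, Pi.single_apply, ite_apply]

theorem entryT_mulVec_apply_eq_zero_of_conserves
    {T : Matrix (Fin 2 × (S → Fin 2)) (Fin 2 × (S → Fin 2)) ℂ}
    (hT : T.Conserves fun p => p.1.val + dcount p.2) (a : Fin 2) {M : ℕ}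
    {v : (S → Fin 2) → ℂ} (hv : ∀ ε, dcount ε ≠ M → v ε = 0) {ε : S → Fin 2}
    (hε : dcount ε ≠ M) : (entryT T a a *ᵥ v) ε = 0 := by
  refine Finset.sum_eq_zero fun ε' _ => ?_
  by_cases hε' : dcount ε' = M
  · have : T (a, ε) (a, ε') = 0 := by
      by_contra h
      have := hT _ _ h
      simp only at this
      omega
    simp [entryT, this]
  · simp [hv ε' hε']

theorem Rplus_zero {η : ℂ} (hη : Complex.sinh η ≠ 0) :
    Rplus η 0 = (Equiv.prodComm (Fin 2) (Fin 2)).toPEquiv.toMatrix := by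
  ext p p'
  fin_cases p <;> fin_cases p' <;> simp [Rplus, bC, cP, cM, Prod.ext_iff, hη]

theorem Rplus_self_kernel (η : ℂ) (q : Fin 2 × Fin 2) :
    Rplus η η q (0, 1) + -Complex.exp η * Rplus η η q (1, 0) = 0 := by
  fin_cases q <;> simp [Rplus, bC, cP, cM, Prod.ext_iff, Complex.exp_neg] <;> field_simp <;> ring

theorem Rsite_prodComm (j : S) :
    Rsite (Equiv.prodComm (Fin 2) (Fin 2)).toPEquiv.toMatrix j = (swapAux j).toPEquiv.toMatrix := by
  ext ⟨a, ε⟩ ⟨c, ε'⟩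
  simp only [Rsite, of_apply, PEquiv.toMatrix_apply, Equiv.toPEquiv_apply, Option.mem_def,
    Option.some.injEq, Equiv.prodComm_apply, Prod.swap, Prod.ext_iff, swapAux_apply,
    Function.update_eq_iff, ← ite_and]
  exact if_congr (by tauto) rfl rfl

theorem Rsite_mul_swapAux (R : Matrix (Fin 2 × Fin 2) (Fin 2 × Fin 2) ℂ) {i₀ i₁ : S}
    (h : i₀ ≠ i₁) :
    Rsite R i₁ * (swapAux i₀).toPEquiv.toMatrix =
      (swapAux i₀).toPEquiv.toMatrix * Rpair R i₀ i₁ := by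
  rw [PEquiv.mul_toMatrix_toPEquiv, PEquiv.toMatrix_toPEquiv_mul, swapAux_symm]
  ext ⟨a, ε⟩ ⟨c, ε'⟩
  simp only [Rsite, Rpair, submatrix_apply, id, swapAux_apply, of_apply,
    Function.update_of_ne h.symm, Function.update_self]
  refine if_congr ⟨fun H => ⟨by simpa using H i₀ h, fun s h₀ h₁ => by simpa [h₀] using H s h₁⟩,
    fun ⟨H₀, H⟩ k hk => ?_⟩ rfl rfl
  by_cases hk₀ : k = i₀
  · simpa [hk₀] using H₀
  · simpa [hk₀] using H k hk₀ hk

theorem Rsite_transpose (R : Matrix (Fin 2 × Fin 2) (Fin 2 × Fin 2) ℂ) (j : S) :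
    (Rsite R j)ᵀ = Rsite Rᵀ j := by
  ext ⟨a, ε⟩ ⟨c, ε'⟩
  simp only [Rsite, transpose_apply, of_apply, eq_comm]

theorem Rpair_transpose (R : Matrix (Fin 2 × Fin 2) (Fin 2 × Fin 2) ℂ) (i₀ i₁ : S) :
    (Rpair R i₀ i₁)ᵀ = Rpair Rᵀ i₀ i₁ := by
  ext ⟨a, ε⟩ ⟨c, ε'⟩
  simp only [Rpair, transpose_apply, of_apply, eq_comm]

theorem Rpair_mul_Rsite_apply (R R' : Matrix (Fin 2 × Fin 2) (Fin 2 × Fin 2) ℂ) {i₀ i₁ j : S}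
    (h₀ : j ≠ i₀) (h₁ : j ≠ i₁) (a c : Fin 2) (ε ε' : S → Fin 2) :
    (Rpair R i₀ i₁ * Rsite R' j) (a, ε) (c, ε') =
      if ∀ s, s ≠ i₀ → s ≠ i₁ → s ≠ j → ε s = ε' s then
        R (ε i₀, ε i₁) (ε' i₀, ε' i₁) * R' (a, ε j) (c, ε' j) else 0 := by
  rw [mul_apply, Fintype.sum_eq_single (a, Function.update ε' j (ε j))]
  · simp only [Rpair, Rsite, of_apply, Function.update_of_ne h₀.symm,
      Function.update_of_ne h₁.symm, Function.update_self, true_and]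
    rw [if_pos fun k hk => Function.update_of_ne hk _ _, ite_mul, zero_mul]
    refine if_congr ⟨fun H s hs₀ hs₁ hs => by simpa [hs] using H s hs₀ hs₁, fun H s hs₀ hs₁ => ?_⟩
      rfl rfl
    by_cases hs : s = j
    · simp [hs]
    · simpa [hs] using H s hs₀ hs₁ hs
  · rintro ⟨b, ν⟩ hne
    simp only [Rpair, Rsite, of_apply]
    split_ifs with H H'
    · refine absurd (Prod.ext H.1.symm (funext fun s => ?_)) hne
      by_cases hs : s = j
      · simpa [hs] using (H.2 j h₀ h₁).symm
      · simpa [hs] using H' s hs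
    all_goals simp

theorem Rpair_commute_Rsite (R R' : Matrix (Fin 2 × Fin 2) (Fin 2 × Fin 2) ℂ) {i₀ i₁ j : S}
    (h₀ : j ≠ i₀) (h₁ : j ≠ i₁) : Commute (Rpair R i₀ i₁) (Rsite R' j) := by
  show _ = _
  ext ⟨a, ε⟩ ⟨c, ε'⟩
  -- transposing turns `Rsite * Rpair` into a product of the shape `Rpair * Rsite`
  rw [← transpose_transpose (Rsite R' j * _), transpose_mul, Rsite_transpose, Rpair_transpose,
    transpose_apply, Rpair_mul_Rsite_apply _ _ h₀ h₁, Rpair_mul_Rsite_apply _ _ h₀ h₁]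
  simp only [transpose_apply, eq_comm, mul_comm]

theorem monodromy_eq_mul_Rpair {η lam : ℂ} {w : S → ℂ} {L₁ L₂ : List S} {i₀ i₁ : S}
    (hη : Complex.sinh η ≠ 0) (h : i₀ ≠ i₁) (hL₁ : ∀ j ∈ L₁, j ≠ i₀ ∧ j ≠ i₁)
    (hw₀ : w i₀ = lam) (hw₁ : w i₁ = lam - η) :
    ∃ W, monodromy (Rplus η) (L₁ ++ i₀ :: i₁ :: L₂) w lam = W * Rpair (Rplus η η) i₀ i₁ := by
  set f := fun j => Rsite (Rplus η (lam - w j)) j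
  set P := (swapAux i₀).toPEquiv.toMatrix (α := ℂ)
  set Q := Rpair (Rplus η η) i₀ i₁
  set P₁ := ((L₁.map f).reverse).prod
  set P₂ := ((L₂.map f).reverse).prod
  have hf₀ : f i₀ = P := by simp [f, hw₀, Rplus_zero hη, Rsite_prodComm, P]
  have hf₁ : f i₁ = Rsite (Rplus η η) i₁ := by simp [f, hw₁]
  have hQP₁ : Commute Q P₁ := Commute.list_prod_right _ _ fun x hx => by
    obtain ⟨j, hj, rfl⟩ := List.mem_map.mp (List.mem_reverse.mp hx)
    exact Rpair_commute_Rsite _ _ (hL₁ j hj).1 (hL₁ j hj).2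
  refine ⟨P₂ * P * P₁, ?_⟩
  calc monodromy (Rplus η) (L₁ ++ i₀ :: i₁ :: L₂) w lam = P₂ * (f i₁ * f i₀) * P₁ := by
        simp [monodromy, f, P₁, P₂, mul_assoc]
    _ = P₂ * P * (Q * P₁) := by
        rw [hf₀, hf₁, Rsite_mul_swapAux _ h, mul_assoc, mul_assoc, mul_assoc]
    _ = P₂ * P * P₁ * Q := by rw [hQP₁.eq]; simp only [mul_assoc]

theorem Rpair_mulVec_eq_zero {R : Matrix (Fin 2 × Fin 2) (Fin 2 × Fin 2) ℂ} {c : ℂ}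
    (hR : ∀ q, R q (0, 1) + c * R q (1, 0) = 0) {i₀ i₁ : S} {ε : S → Fin 2} (h₀ : ε i₀ = 0)
    (h₁ : ε i₁ = 1) (a : Fin 2) :
    Rpair R i₀ i₁ *ᵥ Function.uncurry
      (Pi.single a (Pi.single ε 1 + c • Pi.single (ε ∘ Equiv.swap i₀ i₁) 1)) = 0 := by
  ext ⟨b, ν⟩
  rw [← congrFun (entryT_mulVec _ b a _) ν]
  have hswap : (∀ s, s ≠ i₀ → s ≠ i₁ → ν s = ε (Equiv.swap i₀ i₁ s)) ↔
      ∀ s, s ≠ i₀ → s ≠ i₁ → ν s = ε s :=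
    forall_congr' fun s => imp_congr_right fun hs₀ => imp_congr_right fun hs₁ => by
      rw [Equiv.swap_apply_of_ne_of_ne hs₀ hs₁]
  simp only [mulVec_add, mulVec_smul, mulVec_single_one, Pi.add_apply, Pi.smul_apply, col_apply,
    entryT, Rpair, of_apply, Function.comp_apply, Equiv.swap_apply_left, Equiv.swap_apply_right,
    smul_eq_mul, h₀, h₁, hswap, Pi.zero_apply]
  split_ifs
  · exact hR _
  · simp

theorem exists_Rpair_kernel_vector {R : Matrix (Fin 2 × Fin 2) (Fin 2 × Fin 2) ℂ} {c : ℂ}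
    (hR : ∀ q, R q (0, 1) + c * R q (1, 0) = 0) {i₀ i₁ : S} (h : i₀ ≠ i₁) {M : ℕ} (hM₁ : 1 ≤ M)
    (hM₂ : M < Fintype.card S) :
    ∃ v : (S → Fin 2) → ℂ, v ≠ 0 ∧ (∀ ε, dcount ε ≠ M → v ε = 0) ∧
      ∀ a, Rpair R i₀ i₁ *ᵥ Function.uncurry (Pi.single a v) = 0 := by
  obtain ⟨ε, h₀, h₁, hε⟩ := exists_dcount_eq h hM₁ hM₂
  have hne : ε ≠ ε ∘ Equiv.swap i₀ i₁ := fun he => by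
    simpa [h₀, h₁] using congrFun he i₀
  refine ⟨Pi.single ε 1 + c • Pi.single (ε ∘ Equiv.swap i₀ i₁) 1, fun hv => ?_, fun ε' hε' => ?_,
    Rpair_mulVec_eq_zero hR h₀ h₁⟩
  · simpa [hne] using congrFun hv ε
  · have h₂ : ε' ≠ ε ∘ Equiv.swap i₀ i₁ := fun he => hε' (by rw [he, dcount_comp_perm, hε])
    simp [h₂, show ε' ≠ ε from fun he => hε' (he ▸ hε)]

end Chain

theorem sitesList_eq_append (m Ns : ℕ) (k : Fin Ns) :
    ∃ L₁ L₂, sitesList (m + 2) Ns = L₁ ++ (k, 0) :: (k, 1) :: L₂ ∧ ∀ j ∈ L₁, j.1 ≠ k := by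
  obtain ⟨s, t, hst⟩ := List.append_of_mem (List.mem_finRange k)
  obtain ⟨rest, hrest⟩ : ∃ rest, List.finRange (m + 2) = 0 :: 1 :: rest :=
    ⟨(List.finRange m).map (Fin.succ ∘ Fin.succ), by
      rw [List.finRange_succ, List.finRange_succ]; simp⟩
  have hks : k ∉ s := by
    have := List.nodup_finRange Ns
    rw [hst, List.nodup_append] at this
    exact fun hk => this.2.2 k hk k List.mem_cons_self rfl
  let g (b : Fin Ns) := (List.finRange (m + 2)).map fun β => (b, β)
  refine ⟨s.flatMap g, rest.map (fun β => (k, β)) ++ t.flatMap g, ?_, ?_⟩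
  · simp [sitesList, hst, g, hrest]
  · intro j hj
    obtain ⟨b, hb, hjb⟩ := List.mem_flatMap.mp hj
    obtain ⟨β, -, rfl⟩ := List.mem_map.mp hjb
    exact fun hbk => hks (hbk ▸ hb)

theorem transfer_nonregular_strings_general (ℓ Ns : ℕ) (hl : 2 ≤ ℓ)
    (η : ℂ) (ξ : Fin Ns → ℂ) (k : Fin Ns)
    (hden : ∀ s : FSite ℓ Ns, Complex.sinh (ξ k - wstring ℓ Ns η ξ s + η) ≠ 0)
    (M : ℕ) (hM1 : 1 ≤ M) (hM2 : M < ℓ * Ns) :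
    (∀ v : FIdx2 ℓ Ns → ℂ, (∀ ε, dcount ε ≠ M → v ε = 0) →
        ∀ ε, dcount ε ≠ M →
          (entryT (monodromy (Rplus η) (sitesList ℓ Ns) (wstring ℓ Ns η ξ) (ξ k)) 0 0
            + entryT (monodromy (Rplus η) (sitesList ℓ Ns) (wstring ℓ Ns η ξ) (ξ k)) 1 1).mulVec
              v ε = 0)
    ∧ ∃ v : FIdx2 ℓ Ns → ℂ, v ≠ 0 ∧ (∀ ε, dcount ε ≠ M → v ε = 0) ∧
        (entryT (monodromy (Rplus η) (sitesList ℓ Ns) (wstring ℓ Ns η ξ) (ξ k)) 0 0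
          + entryT (monodromy (Rplus η) (sitesList ℓ Ns) (wstring ℓ Ns η ξ) (ξ k)) 1 1).mulVec
            v = 0 := by
  obtain ⟨m, rfl⟩ : ∃ m, ℓ = m + 2 := ⟨ℓ - 2, by omega⟩
  refine ⟨fun v hv ε hε => ?_, ?_⟩
  · have hT := monodromy_conserves (Rplus_conserves η) (sitesList (m + 2) Ns)
      (wstring (m + 2) Ns η ξ) (ξ k)
    rw [add_mulVec, Pi.add_apply, entryT_mulVec_apply_eq_zero_of_conserves hT 0 hv hε,
      entryT_mulVec_apply_eq_zero_of_conserves hT 1 hv hε, add_zero]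
  let i₀ : FSite (m + 2) Ns := (k, 0)
  let i₁ : FSite (m + 2) Ns := (k, 1)
  have h01 : i₀ ≠ i₁ := by simp [i₀, i₁]
  have hη : Complex.sinh η ≠ 0 := by simpa [wstring, i₀] using hden i₀
  obtain ⟨L₁, L₂, hsites, hL₁⟩ := sitesList_eq_append m Ns k
  obtain ⟨W, hW⟩ := monodromy_eq_mul_Rpair (L₂ := L₂) (lam := ξ k) (w := wstring (m + 2) Ns η ξ)
    hη h01 (fun j hj => ⟨fun h => hL₁ j hj (by rw [h]), fun h => hL₁ j hj (by rw [h])⟩)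
    (by simp [wstring, i₀]) (by simp [wstring, i₁])
  rw [← hsites] at hW
  obtain ⟨v, hv0, hvM, hker⟩ := exists_Rpair_kernel_vector (Rplus_self_kernel η) h01 hM1
    (by simpa [mul_comm] using hM2)
  refine ⟨v, hv0, hvM, ?_⟩
  rw [add_mulVec, entryT_mulVec, entryT_mulVec, hW, ← mulVec_mulVec, hker, ← mulVec_mulVec, hker,
    mulVec_zero]
  exact add_zero 0

/-- With complete `ℓ`-string inhomogeneities `w_j = w^{(ℓ)}_j`, for any
`1 ≤ M ≤ L−1` the transfer matrix `A(ξ_k)+D(ξ_k)` preserves the sector of exactly `M`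
down spins and its restriction there has nontrivial kernel: the spin-1/2 transfer matrix
is non-regular at `λ = ξ_k`. -/
theorem transfer_nonregular_strings (ℓ Ns : ℕ) (hl : 2 ≤ ℓ) (hNs : 1 ≤ Ns)
    (η : ℂ) (ξ : Fin Ns → ℂ) (k : Fin Ns)
    (hden : ∀ s : FSite ℓ Ns, Complex.sinh (ξ k - wstring ℓ Ns η ξ s + η) ≠ 0)
    (M : ℕ) (hM1 : 1 ≤ M) (hM2 : M < ℓ * Ns) :
    (∀ v : FIdx2 ℓ Ns → ℂ, (∀ ε, dcount ε ≠ M → v ε = 0) →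
        ∀ ε, dcount ε ≠ M →
          (entryT (monodromy (Rplus η) (sitesList ℓ Ns) (wstring ℓ Ns η ξ) (ξ k)) 0 0
            + entryT (monodromy (Rplus η) (sitesList ℓ Ns) (wstring ℓ Ns η ξ) (ξ k)) 1 1).mulVec
              v ε = 0)
    ∧ ∃ v : FIdx2 ℓ Ns → ℂ, v ≠ 0 ∧ (∀ ε, dcount ε ≠ M → v ε = 0) ∧
        (entryT (monodromy (Rplus η) (sitesList ℓ Ns) (wstring ℓ Ns η ξ) (ξ k)) 0 0
          + entryT (monodromy (Rplus η) (sitesList ℓ Ns) (wstring ℓ Ns η ξ) (ξ k)) 1 1).mulVec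
            v = 0 :=
  transfer_nonregular_strings_general ℓ Ns hl η ξ k hden M hM1 hM2
end
end
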